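/- A mass-action system G_k is dynamically equivalent to some reversible mass-action system if and only if it is dynamically equivalent to a reversible mass-action system G'_{k'} whose vertex set is contained in the set of source vertices of G. -/

import Mathlib

open Finset

noncomputable section
open scoped Classical

abbrev Vtx (n : ℕ) := Fin n → ℝ

/-- A reaction network: a finite set of directed edges between points of ℝⁿ. -/
abbrev Net (n : ℕ) := Finset (Vtx n × Vtx n)

variable {n : ℕ}

/-- The vertices of a network. -/
def verts (G : Net n) : Finset (Vtx n) := G.image Prod.fst ∪ G.image Prod.snd

/-- The source vertices of a network. -/
def sources (G : Net n) : Finset (Vtx n) := G.image Prod.fst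

/-- No self-loops. -/
def NoLoops (G : Net n) : Prop := ∀ e ∈ G, e.1 ≠ e.2

/-- `J` is a flux vector on `G`: positive on edges, zero on non-edges. -/
def IsFlux (G : Net n) (J : Vtx n × Vtx n → ℝ) : Prop :=
  (∀ e ∈ G, 0 < J e) ∧ ∀ e, e ∉ G → J e = 0

/-- Total outgoing flux at a vertex. -/
def outSum (G : Net n) (J : Vtx n × Vtx n → ℝ) (v : Vtx n) : ℝ :=
  ∑ e ∈ G.filter (fun e => e.1 = v), J e

/-- Total incoming flux at a vertex. -/
def inSum (G : Net n) (J : Vtx n × Vtx n → ℝ) (v : Vtx n) : ℝ :=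
  ∑ e ∈ G.filter (fun e => e.2 = v), J e

/-- Potential at a vertex: incoming minus outgoing flux (0 off the graph). -/
def potential (G : Net n) (J : Vtx n × Vtx n → ℝ) (v : Vtx n) : ℝ :=
  inSum G J v - outSum G J v

/-- Complex-balanced flux: in-flux equals out-flux at every vertex. -/
def ComplexBalanced (G : Net n) (J : Vtx n × Vtx n → ℝ) : Prop :=
  ∀ v ∈ verts G, inSum G J v = outSum G J v

/-- Detailed-balanced flux: every edge is reversible and paired fluxes agree. -/
def DetailedBalanced (G : Net n) (J : Vtx n × Vtx n → ℝ) : Prop :=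
  ∀ e ∈ G, (e.2, e.1) ∈ G ∧ J e = J (e.2, e.1)

/-- Steady state flux: flux-weighted reaction vectors sum to zero. -/
def SteadyFlux (G : Net n) (J : Vtx n × Vtx n → ℝ) : Prop :=
  ∑ e ∈ G, J e • (e.2 - e.1) = 0

/-- Flux-weighted sum of outgoing reaction vectors at a vertex. -/
def netOut (G : Net n) (J : Vtx n × Vtx n → ℝ) (v : Vtx n) : Vtx n :=
  ∑ e ∈ G.filter (fun e => e.1 = v), J e • (e.2 - e.1)

/-- Flux equivalence of two flux systems. -/
def FluxEquiv (G : Net n) (J : Vtx n × Vtx n → ℝ)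
    (G' : Net n) (J' : Vtx n × Vtx n → ℝ) : Prop :=
  ∀ v ∈ verts G ∪ verts G', netOut G J v = netOut G' J' v

/-- Reachability along directed edges. -/
def Reachable (G : Net n) : Vtx n → Vtx n → Prop :=
  Relation.ReflTransGen (fun a b => (a, b) ∈ G)

/-- Weak reversibility: every edge lies on a directed cycle. -/
def WeaklyReversible (G : Net n) : Prop := ∀ e ∈ G, Reachable G e.2 e.1

/-- Reversibility: every edge has its reverse in the network. -/
def Reversible (G : Net n) : Prop := ∀ e ∈ G, (e.2, e.1) ∈ G

/-- Positive state. -/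
def Pos (x : Vtx n) : Prop := ∀ i, 0 < x i

/-- Monomial `x^y = ∏ xᵢ^{yᵢ}` (real exponents). -/
def mono (x y : Vtx n) : ℝ := ∏ i, x i ^ y i

/-- `k` is a vector of rate constants on `G`: positive on edges, zero off. -/
def IsMAS (G : Net n) (k : Vtx n × Vtx n → ℝ) : Prop :=
  (∀ e ∈ G, 0 < k e) ∧ ∀ e, e ∉ G → k e = 0

/-- The mass-action vector field of `G_k`. -/
def maf (G : Net n) (k : Vtx n × Vtx n → ℝ) (x : Vtx n) : Vtx n :=
  ∑ e ∈ G, (k e * mono x e.1) • (e.2 - e.1)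

/-- Dynamical equivalence of mass-action systems. -/
def DynEquiv (G : Net n) (k : Vtx n × Vtx n → ℝ)
    (G' : Net n) (k' : Vtx n × Vtx n → ℝ) : Prop :=
  ∀ x : Vtx n, Pos x → maf G k x = maf G' k' x

/-- `x` is a complex-balanced steady state of `G_k`. -/
def CBsteady (G : Net n) (k : Vtx n × Vtx n → ℝ) (x : Vtx n) : Prop :=
  ∀ v ∈ verts G,
    (∑ e ∈ G.filter (fun e => e.1 = v), k e * mono x v)
      = ∑ e ∈ G.filter (fun e => e.2 = v), k e * mono x e.1

/-- The stoichiometric subspace of a network. -/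
def stoichSubspace (G : Net n) : Submodule ℝ (Vtx n) :=
  Submodule.span ℝ {d | ∃ e ∈ G, d = e.2 - e.1}

/-- Undirected connectivity relation of a network. -/
def connRel (G : Net n) : Vtx n → Vtx n → Prop :=
  Relation.ReflTransGen (fun a b => (a, b) ∈ G ∨ (b, a) ∈ G)

/-- The number of connected components of a network. -/
def numComponents (G : Net n) : ℕ :=
  ((verts G).image (fun v => (verts G).filter (fun w => connRel G v w))).card

/-- The deficiency of a network. -/
def deficiency (G : Net n) : ℤ :=
  (verts G).card - numComponents G - Module.finrank ℝ (stoichSubspace G)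

/-!
Dynamical equivalence only sees, at each source `y`, the net reaction vector
`∑_{y → y'} k (y' - y)`: the monomials `x ^ y` with distinct exponents are linearly independent
functions on the positive orthant. So if a reversible system `G'_{k'}` realizes `G_k` and `v` is
a vertex of `G'` that is not a source of `G`, the net reaction vector of `G'` at `v` vanishes.
Then `v` can be removed: replace every path `a → v → b` by a direct edge `a → b`, distributing
the flux `k' (a, v)` over the targets `b` in proportion to `k' (v, b)`. The balance at `v`
makes this preserve every net reaction vector, and the new network is again reversible.
Removing the vertices outside the sources of `G` one at a time gives the theorem.
-/

/-- Under `x = exp t` the monomial `x ^ y` becomes this character, so Dedekind's independence of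
characters applies. -/
def expDotChar (y : Vtx n) : Multiplicative (Vtx n) →* ℝ :=
  Real.expMonoidHom.comp <| AddMonoidHom.toMultiplicative <|
    AddMonoidHom.mk' (· ⬝ᵥ y) fun a b => add_dotProduct a b y

lemma expDotChar_apply (y t : Vtx n) :
    expDotChar y (Multiplicative.ofAdd t) = Real.exp (t ⬝ᵥ y) := rfl

lemma expDotChar_injective : Function.Injective (expDotChar (n := n)) := by
  intro y z h
  funext i
  have := DFunLike.congr_fun h (Multiplicative.ofAdd (Pi.single i 1))
  simpa [expDotChar_apply, single_dotProduct] using this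

lemma mono_exp (t y : Vtx n) : mono (fun i => Real.exp (t i)) y = Real.exp (t ⬝ᵥ y) := by
  simp only [mono, dotProduct, Real.exp_sum, Real.exp_mul]

lemma eq_zero_of_forall_sum_mono_smul_eq_zero (S : Finset (Vtx n)) (c : Vtx n → Vtx n)
    (h : ∀ x, Pos x → ∑ y ∈ S, mono x y • c y = 0) : ∀ y ∈ S, c y = 0 := by
  have hli : LinearIndependent ℝ fun y : Vtx n => ⇑(expDotChar y) :=
    (linearIndependent_monoidHom _ ℝ).comp _ expDotChar_injective
  intro y hy
  funext j
  refine linearIndependent_iff'.1 hli S (fun y => c y j) ?_ y hy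
  funext t
  have := congrFun (h _ fun i => Real.exp_pos (t.toAdd i)) j
  simpa [mono_exp, ← expDotChar_apply, mul_comm] using this

lemma fst_mem_verts {G : Net n} {e : Vtx n × Vtx n} (he : e ∈ G) : e.1 ∈ verts G :=
  mem_union_left _ (mem_image_of_mem _ he)

lemma snd_mem_verts {G : Net n} {e : Vtx n × Vtx n} (he : e ∈ G) : e.2 ∈ verts G :=
  mem_union_right _ (mem_image_of_mem _ he)

lemma netOut_eq_zero_of_notMem_sources (G : Net n) (k : Vtx n × Vtx n → ℝ) {v : Vtx n}
    (hv : v ∉ sources G) : netOut G k v = 0 := by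
  refine sum_eq_zero fun e he => absurd ?_ hv
  rw [← (mem_filter.1 he).2]
  exact mem_image_of_mem _ (mem_filter.1 he).1

lemma maf_eq_sum_mono_smul_netOut (G : Net n) (k : Vtx n × Vtx n → ℝ) {S : Finset (Vtx n)}
    (hS : sources G ⊆ S) (x : Vtx n) :
    maf G k x = ∑ v ∈ S, mono x v • netOut G k v := by
  rw [maf, ← sum_fiberwise_of_maps_to fun e he => hS (mem_image_of_mem Prod.fst he)]
  refine sum_congr rfl fun v _ => ?_
  rw [netOut, smul_sum]
  refine sum_congr rfl fun e he => ?_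
  rw [(mem_filter.1 he).2, smul_smul, mul_comm]

lemma dynEquiv_iff_netOut_eq (G G' : Net n) (k k' : Vtx n × Vtx n → ℝ) :
    DynEquiv G k G' k' ↔ ∀ v, netOut G k v = netOut G' k' v := by
  have hmaf : ∀ x, maf G k x - maf G' k' x =
      ∑ v ∈ sources G ∪ sources G', mono x v • (netOut G k v - netOut G' k' v) := by
    intro x
    rw [maf_eq_sum_mono_smul_netOut G k subset_union_left,
      maf_eq_sum_mono_smul_netOut G' k' subset_union_right, ← sum_sub_distrib]
    simp only [smul_sub]
  constructor
  · intro h v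
    by_cases hv : v ∈ sources G ∪ sources G'
    · refine sub_eq_zero.1 (eq_zero_of_forall_sum_mono_smul_eq_zero _
        (fun v => netOut G k v - netOut G' k' v) (fun x hx => ?_) v hv)
      rw [← hmaf, h x hx, sub_self]
    · rw [mem_union, not_or] at hv
      rw [netOut_eq_zero_of_notMem_sources G k hv.1,
        netOut_eq_zero_of_notMem_sources G' k' hv.2]
  · intro h x _
    rw [← sub_eq_zero, hmaf]
    simp [h]

lemma netOut_eq_sum_verts {G : Net n} {k : Vtx n × Vtx n → ℝ} (hk : ∀ e, e ∉ G → k e = 0)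
    {V : Finset (Vtx n)} (hV : verts G ⊆ V) (w : Vtx n) :
    netOut G k w = ∑ u ∈ V, k (w, u) • (u - w) := by
  have hsub : G.filter (fun e => e.1 = w) ⊆ {w} ×ˢ V := fun e he => by
    obtain ⟨heG, rfl⟩ := mem_filter.1 he
    exact mem_product.2 ⟨mem_singleton_self _, hV (snd_mem_verts heG)⟩
  rw [netOut, sum_subset hsub, sum_product, sum_singleton]
  intro e he hne
  obtain ⟨h1, -⟩ := mem_product.1 he
  rw [hk e fun heG => hne (mem_filter.2 ⟨heG, mem_singleton.1 h1⟩), zero_smul]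

section Rates

variable {G : Net n} {k : Vtx n × Vtx n → ℝ}

lemma IsMAS.nonneg (hk : IsMAS G k) (e : Vtx n × Vtx n) : 0 ≤ k e := by
  by_cases he : e ∈ G
  · exact (hk.1 e he).le
  · exact (hk.2 e he).ge

lemma IsMAS.pos_iff_mem (hk : IsMAS G k) {e : Vtx n × Vtx n} : 0 < k e ↔ e ∈ G :=
  ⟨fun h => by_contra fun he => h.ne' (hk.2 e he), hk.1 e⟩

lemma IsMAS.pos_swap (hk : IsMAS G k) (hrev : Reversible G) {e : Vtx n × Vtx n}
    (he : 0 < k e) : 0 < k (e.2, e.1) :=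
  hk.pos_iff_mem.2 (hrev e (hk.pos_iff_mem.1 he))

end Rates

section SupportNet

variable {V : Finset (Vtx n)} {k : Vtx n × Vtx n → ℝ}

def supportNet (V : Finset (Vtx n)) (k : Vtx n × Vtx n → ℝ) : Net n :=
  (V ×ˢ V).filter (0 < k ·)

lemma isMAS_supportNet (h0 : ∀ e, 0 ≤ k e) (hV : ∀ e, 0 < k e → e.1 ∈ V ∧ e.2 ∈ V) :
    IsMAS (supportNet V k) k := by
  refine ⟨fun e he => (mem_filter.1 he).2, fun e he => ?_⟩
  by_contra hne
  have hpos := (h0 e).lt_of_ne' hne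
  exact he (mem_filter.2 ⟨mem_product.2 (hV e hpos), hpos⟩)

lemma verts_supportNet_subset : verts (supportNet V k) ⊆ V := by
  intro u hu
  simp only [verts, supportNet, mem_union, mem_image, mem_filter, mem_product] at hu
  obtain ⟨e, ⟨⟨h1, -⟩, -⟩, rfl⟩ | ⟨e, ⟨⟨-, h2⟩, -⟩, rfl⟩ := hu
  exacts [h1, h2]

lemma reversible_supportNet (hswap : ∀ e, 0 < k e → 0 < k (e.2, e.1)) :
    Reversible (supportNet V k) := by
  intro e he
  obtain ⟨he, hpos⟩ := mem_filter.1 he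
  exact mem_filter.2 ⟨mem_product.2 (mem_product.1 he).symm, hswap e hpos⟩

end SupportNet

/-- Rates after bypassing `v`: the flux `k (a, v)` is redistributed over new edges `a → b`
in proportion to `k (v, b)`. -/
def shortcutRates (V : Finset (Vtx n)) (k : Vtx n × Vtx n → ℝ) (v : Vtx n) :
    Vtx n × Vtx n → ℝ :=
  fun e => if e.1 = v ∨ e.2 = v then 0
    else k e + k (e.1, v) * k (v, e.2) / ∑ u ∈ V.erase v, k (v, u)

section Shortcut

variable {G : Net n} {k : Vtx n × Vtx n → ℝ} {v : Vtx n}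

lemma shortcutRates_nonneg (hk : IsMAS G k) (e : Vtx n × Vtx n) :
    0 ≤ shortcutRates (verts G) k v e := by
  unfold shortcutRates
  split_ifs
  · exact le_rfl
  · exact add_nonneg (hk.nonneg e) (div_nonneg (mul_nonneg (hk.nonneg _) (hk.nonneg _))
      (sum_nonneg fun u _ => hk.nonneg _))

lemma shortcutRates_pos_iff (hk : IsMAS G k) {e : Vtx n × Vtx n} :
    0 < shortcutRates (verts G) k v e ↔
      e.1 ≠ v ∧ e.2 ≠ v ∧ (0 < k e ∨ 0 < k (e.1, v) ∧ 0 < k (v, e.2)) := by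
  unfold shortcutRates
  split_ifs with hv
  · simp only [lt_irrefl, false_iff]
    tauto
  · rw [not_or] at hv
    simp only [hv, ne_eq, not_false_eq_true, true_and]
    have hK : 0 ≤ ∑ u ∈ (verts G).erase v, k (v, u) := sum_nonneg fun u _ => hk.nonneg _
    constructor
    · intro h
      by_contra! hzero
      have hprod : k (e.1, v) * k (v, e.2) = 0 := by
        rcases (hk.nonneg (e.1, v)).lt_or_eq with h1 | h1
        · rw [le_antisymm (hzero.2 h1) (hk.nonneg _), mul_zero]
        · rw [← h1, zero_mul]
      rw [le_antisymm hzero.1 (hk.nonneg e), hprod, zero_div, add_zero] at h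
      exact h.false
    · rintro (he | ⟨h1, h2⟩)
      · exact add_pos_of_pos_of_nonneg he
          (div_nonneg (mul_nonneg (hk.nonneg _) (hk.nonneg _)) hK)
      · have hmem : e.2 ∈ (verts G).erase v :=
          mem_erase.2 ⟨hv.2, snd_mem_verts (e := (v, e.2)) (hk.pos_iff_mem.1 h2)⟩
        have hKpos := h2.trans_le (single_le_sum (fun u _ => hk.nonneg (v, u)) hmem)
        exact add_pos_of_nonneg_of_pos (hk.nonneg e) (by positivity)

lemma isMAS_supportNet_shortcutRates (hk : IsMAS G k) :
    IsMAS (supportNet ((verts G).erase v) (shortcutRates (verts G) k v))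
      (shortcutRates (verts G) k v) := by
  refine isMAS_supportNet (shortcutRates_nonneg hk) fun e he => ?_
  obtain ⟨h1, h2, he | ⟨ha, hb⟩⟩ := (shortcutRates_pos_iff hk).1 he
  · have heG := hk.pos_iff_mem.1 he
    exact ⟨mem_erase.2 ⟨h1, fst_mem_verts heG⟩, mem_erase.2 ⟨h2, snd_mem_verts heG⟩⟩
  · exact ⟨mem_erase.2 ⟨h1, fst_mem_verts (e := (e.1, v)) (hk.pos_iff_mem.1 ha)⟩,
      mem_erase.2 ⟨h2, snd_mem_verts (e := (v, e.2)) (hk.pos_iff_mem.1 hb)⟩⟩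

lemma shortcutRates_pos_swap (hk : IsMAS G k) (hrev : Reversible G) {e : Vtx n × Vtx n}
    (he : 0 < shortcutRates (verts G) k v e) :
    0 < shortcutRates (verts G) k v (e.2, e.1) := by
  rw [shortcutRates_pos_iff hk] at he ⊢
  obtain ⟨h1, h2, he | ⟨ha, hb⟩⟩ := he
  · exact ⟨h2, h1, Or.inl (hk.pos_swap hrev he)⟩
  · exact ⟨h2, h1, Or.inr ⟨hk.pos_swap hrev hb, hk.pos_swap hrev ha⟩⟩

lemma netOut_supportNet_shortcutRates (hk : IsMAS G k) (hrev : Reversible G)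
    (hv : netOut G k v = 0) (w : Vtx n) :
    netOut (supportNet ((verts G).erase v) (shortcutRates (verts G) k v))
      (shortcutRates (verts G) k v) w = netOut G k w := by
  set E := (verts G).erase v
  set K := ∑ u ∈ E, k (v, u)
  have hGE : verts G ⊆ insert v E := fun u hu => by
    rw [mem_insert, mem_erase]
    tauto
  have hE := (isMAS_supportNet_shortcutRates (v := v) hk).2
  rcases eq_or_ne w v with rfl | hw
  · rw [hv, netOut_eq_sum_verts hE verts_supportNet_subset]
    exact sum_eq_zero fun u _ => by simp [shortcutRates]
  have hbal : ∑ u ∈ E, k (v, u) • (u - v) = 0 := by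
    rw [← hv, netOut_eq_sum_verts hk.2 hGE, sum_insert (notMem_erase v _), sub_self, smul_zero,
      zero_add]
  -- `K = 0` means `v` has no edge to another vertex, hence, by reversibility, `k (w, v) = 0`.
  have hK : k (w, v) / K * K = k (w, v) := by
    refine div_mul_cancel_of_imp fun hK0 => ?_
    by_contra hne
    have hpos := (hk.nonneg (w, v)).lt_of_ne' hne
    have hwE : w ∈ E := mem_erase.2 ⟨hw, fst_mem_verts (hk.pos_iff_mem.1 hpos)⟩
    exact (hk.pos_swap hrev hpos).ne'
      ((sum_eq_zero_iff_of_nonneg fun u _ => hk.nonneg _).1 hK0 w hwE)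
  rw [netOut_eq_sum_verts hE (verts_supportNet_subset.trans (subset_insert v E)),
    netOut_eq_sum_verts hk.2 hGE, sum_insert (notMem_erase v _), sum_insert (notMem_erase v _)]
  have hterm : ∀ u ∈ E, shortcutRates (verts G) k v (w, u) • (u - w) =
      k (w, u) • (u - w) + (k (w, v) / K) • (k (v, u) • (u - v) + k (v, u) • (v - w)) := by
    intro u hu
    simp only [shortcutRates, hw, (mem_erase.1 hu).1, or_self, if_false]
    module
  rw [sum_congr rfl hterm, sum_add_distrib, ← smul_sum, sum_add_distrib, hbal, ← sum_smul,
    zero_add, smul_smul, hK, show shortcutRates (verts G) k v (w, v) = 0 from if_pos (Or.inr rfl),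
    zero_smul, zero_add, add_comm]

end Shortcut

lemma exists_reversible_netOut_eq_of_verts_subset (S : Finset (Vtx n)) {G : Net n}
    {k : Vtx n × Vtx n → ℝ} (hk : IsMAS G k) (hrev : Reversible G)
    (hS : ∀ v ∉ S, netOut G k v = 0) :
    ∃ (G' : Net n) (k' : Vtx n × Vtx n → ℝ), IsMAS G' k' ∧ Reversible G' ∧
      (∀ w, netOut G' k' w = netOut G k w) ∧ verts G' ⊆ S := by
  induction h : (verts G \ S).card using Nat.strong_induction_on generalizing G k with
  | _ N ih =>
    by_cases hGS : verts G ⊆ S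
    · exact ⟨G, k, hk, hrev, fun _ => rfl, hGS⟩
    obtain ⟨v, hvG, hvS⟩ := not_subset.1 hGS
    set G₁ := supportNet ((verts G).erase v) (shortcutRates (verts G) k v)
    have hout := netOut_supportNet_shortcutRates hk hrev (hS v hvS)
    have hlt : (verts G₁ \ S).card < N := by
      rw [← h]
      refine (card_le_card ?_).trans_lt (card_erase_lt_of_mem (mem_sdiff.2 ⟨hvG, hvS⟩))
      exact (sdiff_subset_sdiff verts_supportNet_subset le_rfl).trans (erase_sdiff_comm _ _ _).le
    obtain ⟨G', k', hk', hrev', hout', hG'S⟩ := ih _ hlt (isMAS_supportNet_shortcutRates hk)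
      (reversible_supportNet fun _ => shortcutRates_pos_swap hk hrev)
      (fun w hw => (hout w).trans (hS w hw)) rfl
    exact ⟨G', k', hk', hrev', fun w => (hout' w).trans (hout w), hG'S⟩

theorem stmt17_general (G : Net n) (k : Vtx n × Vtx n → ℝ) :
    (∃ (G' : Net n) (k' : Vtx n × Vtx n → ℝ),
      IsMAS G' k' ∧ DynEquiv G k G' k' ∧ Reversible G') ↔
    (∃ (G' : Net n) (k' : Vtx n × Vtx n → ℝ),
      IsMAS G' k' ∧ DynEquiv G k G' k' ∧ Reversible G' ∧
        verts G' ⊆ sources G) := by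
  refine ⟨fun ⟨G', k', hk', hdyn, hrev'⟩ => ?_,
    fun ⟨G', k', hk', hdyn, hrev', _⟩ => ⟨G', k', hk', hdyn, hrev'⟩⟩
  rw [dynEquiv_iff_netOut_eq] at hdyn
  obtain ⟨G'', k'', hk'', hrev'', hout, hsub⟩ := exists_reversible_netOut_eq_of_verts_subset
    (sources G) hk' hrev' fun v hv => (hdyn v).symm.trans (netOut_eq_zero_of_notMem_sources G k hv)
  refine ⟨G'', k'', hk'', ?_, hrev'', hsub⟩
  exact (dynEquiv_iff_netOut_eq G G'' k k'').2 fun w => (hdyn w).trans (hout w).symm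

theorem stmt17 (G : Net n) (k : Vtx n × Vtx n → ℝ) (hk : IsMAS G k) :
    (∃ (G' : Net n) (k' : Vtx n × Vtx n → ℝ),
      IsMAS G' k' ∧ DynEquiv G k G' k' ∧ Reversible G') ↔
    (∃ (G' : Net n) (k' : Vtx n × Vtx n → ℝ),
      IsMAS G' k' ∧ DynEquiv G k G' k' ∧ Reversible G' ∧
        verts G' ⊆ sources G) :=
  stmt17_general G k
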